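/- Let H ∈ {0,1}^{m×n} ⊆ ℤ^{m×n}, m < n, and S a size-(m+1) subset of columns. The perm-vector ω based on S, defined by ω_i = perm_ℤ(H_{S∖i}) for i ∈ S and ω_i = 0 otherwise, lies in the fundamental cone of H: ω_i ≥ 0 for all i, and for all rows j and all i with h_{j,i}=1, ω_i ≤ Σ_{i'≠i, h_{j,i'}=1} ω_{i'}. -/

import Mathlib

open Matrix BigOperators

/-- The perm-vector of `H` based on a size-`(m+1)` column subset `S`:
`ω i = perm(H_{S∖i})` for `i ∈ S`, and `0` otherwise. -/
def permVec {m n : ℕ} (H : Matrix (Fin m) (Fin n) ℤ) (S : Finset (Fin n))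
    (hS : S.card = m + 1) : Fin n → ℤ :=
  fun i =>
    if hi : i ∈ S then
      (H.submatrix id (fun k =>
          (((S.erase i).orderIsoOfFin
            (by simp [Finset.card_erase_of_mem hi, hS]) k : Fin n)))).permanent
    else 0

/-- The fundamental cone of a 0-1 integer matrix `H`, as a subset of `ℝⁿ`. -/
def inFundCone {m n : ℕ} (H : Matrix (Fin m) (Fin n) ℤ) (ω : Fin n → ℝ) : Prop :=
  (∀ i, 0 ≤ ω i) ∧
  ∀ (j : Fin m) (i : Fin n), H j i = 1 →
    ω i ≤ ∑ i' ∈ (Finset.univ.filter fun i' => H j i' = 1).erase i, ω i'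

/-!
Expanding the permanent, `ω i` is the total weight of the injections `f` of the rows into
`S ∖ {i}`, the weight being `∏ j, H j (f j)`; with 0-1 entries, only injections that pick a
`1` in every row contribute. Fix a row `a` with `H a i = 1`. Rerouting row `a` of such an
injection from its column `f a` to `i` yields an injection into `S ∖ {f a}` of the same weight,
where `f a ∈ I_a ∖ {i}`, and `f` is recovered from `f a` and the rerouted map. This injective,
weight-preserving rerouting gives `ω i ≤ ∑_{k ∈ I_a ∖ {i}} ω k`.
-/

open Finset Function

lemma nonneg_of_eq_zero_or_eq_one {R : Type*} [Zero R] [One R] [Preorder R] [ZeroLEOneClass R]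
    {a : R} (h : a = 0 ∨ a = 1) : 0 ≤ a :=
  h.elim Eq.ge fun h => h.symm ▸ zero_le_one

variable {ι κ R : Type*} [Fintype ι] [DecidableEq ι]

lemma prod_apply_update_of_eq [CommMonoid R] (H : Matrix ι κ R) (f : ι → κ) {a : ι} {k : κ}
    (h : H a k = H a (f a)) : ∏ j, H j (update f a k j) = ∏ j, H j (f j) := by
  have : (fun j => H j (update f a k j)) = fun j => H j (f j) := by
    rw [funext fun j => apply_update (fun j => H j) f a k j, h]
    exact update_eq_self a fun j => H j (f j)
  rw [this]

variable [Fintype κ] [DecidableEq κ]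

def injectionsInto (T : Finset κ) : Finset (ι → κ) :=
  univ.filter fun f => Injective f ∧ ∀ a, f a ∈ T

lemma mem_injectionsInto {T : Finset κ} {f : ι → κ} :
    f ∈ injectionsInto T ↔ Injective f ∧ ∀ a, f a ∈ T := by
  simp [injectionsInto]

lemma update_mem_injectionsInto_erase {S : Finset κ} {f : ι → κ} {i : κ}
    (hf : f ∈ injectionsInto (S.erase i)) (hi : i ∈ S) (a : ι) :
    update f a i ∈ injectionsInto (S.erase (f a)) := by
  obtain ⟨hinj, hmem⟩ := mem_injectionsInto.1 hf
  have hne : ∀ b, f b ≠ i := fun b => ne_of_mem_erase (hmem b)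
  refine mem_injectionsInto.2 ⟨fun b c h => ?_, fun b => ?_⟩
  · by_cases hb : b = a <;> by_cases hc : c = a
    · rw [hb, hc]
    · rw [hb, update_self, update_of_ne hc] at h
      exact absurd h.symm (hne c)
    · rw [hc, update_self, update_of_ne hb] at h
      exact absurd h (hne b)
    · rw [update_of_ne hb, update_of_ne hc] at h
      exact hinj h
  · rcases eq_or_ne b a with rfl | hb
    · rw [update_self]
      exact mem_erase.2 ⟨(hne b).symm, hi⟩
    · rw [update_of_ne hb]
      exact mem_erase.2 ⟨hinj.ne hb, mem_of_mem_erase (hmem b)⟩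

theorem permanent_submatrix_eq_sum_injectionsInto [CommSemiring R] (H : Matrix ι κ R)
    {T : Finset κ} (e : ι ≃ T) :
    (H.submatrix id fun k => (e k : κ)).permanent =
      ∑ f ∈ injectionsInto T, ∏ j, H j (f j) := by
  rw [← Matrix.permanent_transpose]
  refine sum_bij (fun σ _ j => (e (σ j) : κ)) (fun σ _ => ?_) (fun σ _ τ _ h => ?_)
    (fun f hf => ?_) (fun σ _ => rfl)
  · exact mem_injectionsInto.2 ⟨fun a b h => σ.injective (e.injective (Subtype.ext h)),
      fun a => (e (σ a)).2⟩
  · exact Equiv.ext fun j => e.injective (Subtype.ext (congrFun h j))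
  · obtain ⟨hinj, hT⟩ := mem_injectionsInto.1 hf
    have hσ : Injective fun j => e.symm ⟨f j, hT j⟩ :=
      fun a b h => hinj (congrArg Subtype.val (e.symm.injective h))
    exact ⟨Equiv.ofBijective _ hσ.bijective_of_finite, mem_univ _, by ext j; simp⟩

theorem sum_injectionsInto_erase_le [CommSemiring R] [PartialOrder R] [IsOrderedRing R]
    [DecidableEq R] (H : Matrix ι κ R) (hH : ∀ j k, H j k = 0 ∨ H j k = 1) {S : Finset κ}
    {i : κ} (hi : i ∈ S) {a : ι} (hai : H a i = 1) :
    ∑ f ∈ injectionsInto (S.erase i), ∏ j, H j (f j) ≤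
      ∑ p ∈ ((S.erase i).filter fun k => H a k = 1).sigma fun k => injectionsInto (S.erase k),
        ∏ j, H j (p.2 j) := by
  let reroute : (ι → κ) → (_ : κ) × (ι → κ) := fun f => ⟨f a, update f a i⟩
  have hinj : Injective reroute := fun f g h => by
    obtain ⟨hfg, hupd⟩ := Sigma.mk.inj_iff.1 h
    rw [← update_eq_self a f, ← update_idem i (f a) f, eq_of_heq hupd, hfg, update_idem,
      update_eq_self]
  calc ∑ f ∈ injectionsInto (S.erase i), ∏ j, H j (f j)
      = ∑ f ∈ (injectionsInto (S.erase i)).filter fun f => H a (f a) = 1, ∏ j, H j (f j) := by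
        refine (sum_filter_of_ne fun f _ hf => ?_).symm
        exact (hH a (f a)).resolve_left fun h0 => hf (prod_eq_zero (mem_univ a) h0)
    _ = ∑ p ∈ ((injectionsInto (S.erase i)).filter fun f => H a (f a) = 1).image reroute,
          ∏ j, H j (p.2 j) := by
        rw [sum_image hinj.injOn]
        exact sum_congr rfl fun f hf =>
          (prod_apply_update_of_eq H f (hai.trans (mem_filter.1 hf).2.symm)).symm
    _ ≤ _ := by
        refine sum_le_sum_of_subset_of_nonneg ?_ fun p _ _ =>
          prod_nonneg fun j _ => nonneg_of_eq_zero_or_eq_one (hH _ _)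
        intro p hp
        obtain ⟨f, hf, rfl⟩ := mem_image.1 hp
        obtain ⟨hf, hfa⟩ := mem_filter.1 hf
        exact mem_sigma.2 ⟨mem_filter.2 ⟨(mem_injectionsInto.1 hf).2 a, hfa⟩,
          update_mem_injectionsInto_erase hf hi a⟩

section permVec

variable {m n : ℕ} (H : Matrix (Fin m) (Fin n) ℤ) (S : Finset (Fin n)) (hS : S.card = m + 1)

lemma permVec_eq_sum_injectionsInto {i : Fin n} (hi : i ∈ S) :
    permVec H S hS i = ∑ f ∈ injectionsInto (S.erase i), ∏ j, H j (f j) := by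
  rw [permVec, dif_pos hi]
  exact permanent_submatrix_eq_sum_injectionsInto H
    ((S.erase i).orderIsoOfFin (by simp [card_erase_of_mem hi, hS])).toEquiv

lemma permVec_of_notMem {i : Fin n} (hi : i ∉ S) : permVec H S hS i = 0 := by
  rw [permVec, dif_neg hi]

variable {H}

lemma permVec_nonneg (hH : ∀ j k, 0 ≤ H j k) (i : Fin n) : 0 ≤ permVec H S hS i := by
  by_cases hi : i ∈ S
  · rw [permVec_eq_sum_injectionsInto H S hS hi]
    exact sum_nonneg fun f _ => prod_nonneg fun j _ => hH j (f j)
  · rw [permVec_of_notMem H S hS hi]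

lemma permVec_le_sum_erase (hH : ∀ j k, H j k = 0 ∨ H j k = 1) {a : Fin m} {i : Fin n}
    (hai : H a i = 1) :
    permVec H S hS i ≤ ∑ k ∈ (univ.filter fun k => H a k = 1).erase i, permVec H S hS k := by
  have hH0 : ∀ j k, 0 ≤ H j k := fun j k => nonneg_of_eq_zero_or_eq_one (hH j k)
  by_cases hi : i ∈ S
  · calc permVec H S hS i = ∑ f ∈ injectionsInto (S.erase i), ∏ j, H j (f j) :=
          permVec_eq_sum_injectionsInto H S hS hi
      _ ≤ ∑ p ∈ ((S.erase i).filter fun k => H a k = 1).sigma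
            fun k => injectionsInto (S.erase k), ∏ j, H j (p.2 j) :=
          sum_injectionsInto_erase_le H hH hi hai
      _ = ∑ k ∈ (S.erase i).filter fun k => H a k = 1, permVec H S hS k := by
          rw [sum_sigma]
          exact sum_congr rfl fun k hk =>
            (permVec_eq_sum_injectionsInto H S hS (mem_of_mem_erase (mem_filter.1 hk).1)).symm
      _ ≤ ∑ k ∈ (univ.filter fun k => H a k = 1).erase i, permVec H S hS k := by
          refine sum_le_sum_of_subset_of_nonneg ?_ fun k _ _ => permVec_nonneg S hS hH0 k
          intro k hk
          obtain ⟨hk, hak⟩ := mem_filter.1 hk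
          exact mem_erase.2 ⟨ne_of_mem_erase hk, mem_filter.2 ⟨mem_univ k, hak⟩⟩
  · rw [permVec_of_notMem H S hS hi]
    exact sum_nonneg fun k _ => permVec_nonneg S hS hH0 k

end permVec

theorem stmt5_general {m n : ℕ} (H : Matrix (Fin m) (Fin n) ℤ)
    (hH : ∀ j i, H j i = 0 ∨ H j i = 1)
    (S : Finset (Fin n)) (hS : S.card = m + 1) :
    inFundCone H (fun i => ((permVec H S hS i : ℤ) : ℝ)) := by
  have hH0 : ∀ j i, 0 ≤ H j i := fun j i => nonneg_of_eq_zero_or_eq_one (hH j i)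
  refine ⟨fun i => Int.cast_nonneg (permVec_nonneg S hS hH0 i), fun j i hji => ?_⟩
  dsimp only
  exact_mod_cast permVec_le_sum_erase S hS hH hji

theorem stmt5 {m n : ℕ} (hmn : m < n) (H : Matrix (Fin m) (Fin n) ℤ)
    (hH : ∀ j i, H j i = 0 ∨ H j i = 1)
    (S : Finset (Fin n)) (hS : S.card = m + 1) :
    inFundCone H (fun i => ((permVec H S hS i : ℤ) : ℝ)) :=
  stmt5_general H hH S hS
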